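/- There is a unique unitary operator Z : L²(ℝ,ℂ) → L²((0,1)×(0,1),ℂ) such that for every continuous compactly supported f : ℝ → ℂ and every (x,a) ∈ (0,1)×(0,1), (Zf)(x,a) = ∑_{n∈ℤ} f(x+n)·e^{2πi·a·n} (a sum with only finitely many nonzero terms). In particular, this Zak-type transform intertwines the norm of L²(ℝ) with that of L²((0,1)²): ∫₀¹∫₀¹ |(Zf)(x,a)|² da dx = ∫_ℝ |f|². -/

import Mathlib

open MeasureTheory Real

/-- The defining property of the Zak-type transform
`Z : L²(ℝ) → L²((0,1)×(0,1))`: for every continuous compactly supported `f`,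
`(Zf)(x,a) = ∑_{n∈ℤ} f(x+n) e^{2πian}` (almost everywhere on `(0,1)×(0,1)`). -/
def IsZakTransform
    (Zop : Lp ℂ 2 (volume : Measure ℝ) ≃ₗᵢ[ℂ]
      Lp ℂ 2 ((volume : Measure (ℝ × ℝ)).restrict (Set.Ioo (0 : ℝ) 1 ×ˢ Set.Ioo (0 : ℝ) 1))) :
    Prop :=
  ∀ f : ℝ → ℂ, Continuous f → HasCompactSupport f →
    ∀ g : Lp ℂ 2 (volume : Measure ℝ), (g : ℝ → ℂ) =ᵐ[volume] f →
      (Zop g : ℝ × ℝ → ℂ)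
          =ᵐ[(volume : Measure (ℝ × ℝ)).restrict (Set.Ioo (0 : ℝ) 1 ×ˢ Set.Ioo (0 : ℝ) 1)]
        fun x : ℝ × ℝ =>
          ∑' n : ℤ, f (x.1 + (n : ℝ)) * Complex.exp (2 * (π : ℂ) * Complex.I * (x.2 : ℂ) * (n : ℂ))

namespace ZakProof
open Complex Set Submodule
open scoped ComplexConjugate

noncomputable section


abbrev I01 : Set ℝ := Set.Ioo 0 1
abbrev μ1 : Measure ℝ := (volume : Measure ℝ).restrict I01
abbrev νsq : Measure (ℝ × ℝ) := (volume : Measure (ℝ × ℝ)).restrict (I01 ×ˢ I01)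

def chr (k : ℤ) (x : ℝ) : ℂ := Complex.exp (2 * (π : ℂ) * Complex.I * (x : ℂ) * (k : ℂ))

lemma chr_continuous (k : ℤ) : Continuous (chr k) := by
  unfold chr; fun_prop

lemma conj_chr (k : ℤ) (x : ℝ) : conj (chr k x) = chr (-k) x := by
  rw [chr, ← Complex.exp_conj]
  congr 1
  simp only [map_mul, Complex.conj_I, Complex.conj_ofReal, map_ofNat]
  rw [← Complex.ofReal_intCast, Complex.conj_ofReal]
  push_cast
  ring

lemma chr_mul (j k : ℤ) (x : ℝ) : chr j x * chr k x = chr (j + k) x := by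
  rw [chr, chr, chr, ← Complex.exp_add]
  congr 1
  push_cast
  ring

lemma chr_zero (x : ℝ) : chr 0 x = 1 := by simp [chr]

lemma norm_chr (k : ℤ) (x : ℝ) : ‖chr k x‖ = 1 := by
  rw [chr, Complex.norm_exp]
  norm_num [Complex.mul_re, Complex.mul_im]

lemma chr_int_add (k n : ℤ) (x : ℝ) : chr k (x + n) = chr k x := by
  have h : 2 * (π : ℂ) * Complex.I * ((x : ℝ) + (n : ℝ) : ℝ) * (k : ℂ)
      = 2 * (π : ℂ) * Complex.I * (x : ℂ) * (k : ℂ) + (k * n : ℤ) * (2 * (π : ℂ) * Complex.I) := by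
    push_cast; ring
  rw [chr, h, Complex.exp_add, Complex.exp_int_mul_two_pi_mul_I, mul_one, chr]

lemma intChr (k n : ℤ) : ∫ x in Ioo (n : ℝ) (n + 1), chr k x = if k = 0 then 1 else 0 := by
  rw [← integral_Ioc_eq_integral_Ioo, ← intervalIntegral.integral_of_le (by linarith)]
  by_cases hk : k = 0
  · simp [hk, chr_zero]
  · have hc : (2 * (π : ℂ) * Complex.I * (k : ℂ)) ≠ 0 :=
      mul_ne_zero (mul_ne_zero (mul_ne_zero two_ne_zero
        (Complex.ofReal_ne_zero.mpr Real.pi_ne_zero)) Complex.I_ne_zero)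
        (Int.cast_ne_zero.mpr hk)
    have hfun : ∀ x : ℝ, chr k x = Complex.exp ((2 * (π : ℂ) * Complex.I * (k : ℂ)) * (x : ℂ)) := by
      intro x; rw [chr]; ring_nf
    simp_rw [hfun]
    rw [integral_exp_mul_complex hc]
    have h1 : (2 * (π : ℂ) * Complex.I * (k : ℂ)) * ((n : ℝ) + 1 : ℝ)
        = (2 * (π : ℂ) * Complex.I * (k : ℂ)) * ((n : ℝ) : ℂ) + (k : ℤ) * (2 * (π : ℂ) * Complex.I) := by
      push_cast; ring
    rw [h1, Complex.exp_add, Complex.exp_int_mul_two_pi_mul_I, mul_one, sub_self, zero_div,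
      if_neg hk]

lemma intChr0 (k : ℤ) : ∫ x in I01, chr k x = if k = 0 then 1 else 0 := by
  simpa using intChr k 0



-- finiteness instances
instance : IsFiniteMeasure μ1 := by
  constructor; rw [Measure.restrict_apply_univ]; simp [Real.volume_Ioo]

lemma nu_prod : νsq = μ1.prod μ1 := by
  show (volume : Measure (ℝ × ℝ)).restrict (I01 ×ˢ I01) = _
  rw [Measure.volume_eq_prod, Measure.prod_restrict]

instance : IsFiniteMeasure νsq := by
  rw [nu_prod]; infer_instance

-- inner product helper
lemma inner_toLp_left {α : Type*} [MeasurableSpace α] {μ : Measure α} (f : α → ℂ)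
    (hf : MemLp f 2 μ) (g : Lp ℂ 2 μ) :
    (inner ℂ (hf.toLp f) g : ℂ) = ∫ x, conj (f x) * (g : α → ℂ) x ∂μ := by
  rw [L2.inner_def]
  refine integral_congr_ae ?_
  filter_upwards [hf.coeFn_toLp] with x hx
  rw [hx, RCLike.inner_apply, mul_comm]

lemma inner_toLp_toLp {α : Type*} [MeasurableSpace α] {μ : Measure α} (f g : α → ℂ)
    (hf : MemLp f 2 μ) (hg : MemLp g 2 μ) :
    (inner ℂ (hf.toLp f) (hg.toLp g) : ℂ) = ∫ x, conj (f x) * g x ∂μ := by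
  rw [inner_toLp_left]
  refine integral_congr_ae ?_
  filter_upwards [hg.coeFn_toLp] with x hx
  rw [hx]

-- families
def eA (nm : ℤ × ℤ) : ℝ → ℂ := (Ioo (nm.1 : ℝ) (nm.1 + 1)).indicator (chr nm.2)

def eB (nm : ℤ × ℤ) : ℝ × ℝ → ℂ := fun p => chr nm.2 p.1 * chr nm.1 p.2

lemma memA (nm : ℤ × ℤ) : MemLp (eA nm) 2 (volume : Measure ℝ) := by
  rw [eA, memLp_indicator_iff_restrict measurableSet_Ioo]
  haveI : IsFiniteMeasure ((volume : Measure ℝ).restrict (Ioo (nm.1 : ℝ) (nm.1 + 1))) := by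
    constructor; rw [Measure.restrict_apply_univ]; simp [Real.volume_Ioo]
  exact MemLp.of_bound (chr_continuous nm.2).aestronglyMeasurable 1
    (ae_of_all _ fun x => (norm_chr _ _).le)

lemma eB_continuous (nm : ℤ × ℤ) : Continuous (eB nm) :=
  ((chr_continuous nm.2).comp continuous_fst).mul ((chr_continuous nm.1).comp continuous_snd)

lemma memB (nm : ℤ × ℤ) : MemLp (eB nm) 2 νsq :=
  MemLp.of_bound (eB_continuous nm).aestronglyMeasurable 1
    (ae_of_all _ fun p => by rw [eB]; rw [norm_mul, norm_chr, norm_chr, mul_one])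

def A (nm : ℤ × ℤ) : Lp ℂ 2 (volume : Measure ℝ) := (memA nm).toLp _

def B (nm : ℤ × ℤ) : Lp ℂ 2 νsq := (memB nm).toLp _

lemma orthoA : Orthonormal ℂ A := by
  rw [orthonormal_iff_ite]
  rintro ⟨n, m⟩ ⟨n', m'⟩
  rw [A, A, inner_toLp_toLp]
  by_cases hn : n = n'
  · subst hn
    have hpt : ∀ x, conj (eA (n, m) x) * eA (n, m') x
        = (Ioo (n : ℝ) (n + 1)).indicator (chr (m' - m)) x := by
      intro x
      by_cases hx : x ∈ Ioo (n : ℝ) (n + 1) <;>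
        simp [eA, Set.indicator, hx, conj_chr, chr_mul, sub_eq_neg_add]
    simp_rw [hpt]
    rw [integral_indicator measurableSet_Ioo, intChr]
    by_cases hm : m = m' <;> simp [hm, sub_eq_zero, Prod.ext_iff, eq_comm]
  · have hdisj : Ioo (n : ℝ) (n + 1) ∩ Ioo (n' : ℝ) (n' + 1) = ∅ := by
      rw [Set.eq_empty_iff_forall_notMem]
      rintro x ⟨⟨h1, h2⟩, ⟨h3, h4⟩⟩
      apply hn
      have e1 : (n : ℝ) < (n' : ℝ) + 1 := lt_trans h1 h4
      have e2 : (n' : ℝ) < (n : ℝ) + 1 := lt_trans h3 h2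
      have : n < n' + 1 := by exact_mod_cast e1
      have : n' < n + 1 := by exact_mod_cast e2
      omega
    have hpt : ∀ x, conj (eA (n, m) x) * eA (n', m') x = 0 := by
      intro x
      by_cases hx : x ∈ Ioo (n : ℝ) (n + 1)
      · by_cases hx' : x ∈ Ioo (n' : ℝ) (n' + 1)
        · exact absurd (Set.mem_inter hx hx') (by rw [hdisj]; exact Set.notMem_empty x)
        · simp [eA, Set.indicator, hx']
      · simp [eA, Set.indicator, hx]
    simp_rw [hpt]
    rw [integral_zero, if_neg (by simp [Prod.ext_iff]; intro h; exact absurd h hn)]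

lemma orthoB : Orthonormal ℂ B := by
  rw [orthonormal_iff_ite]
  rintro ⟨n, m⟩ ⟨n', m'⟩
  rw [B, B, inner_toLp_toLp]
  have hpt : ∀ p : ℝ × ℝ, conj (eB (n, m) p) * eB (n', m') p
      = chr (m' - m) p.1 * chr (n' - n) p.2 := by
    intro p
    simp only [eB, map_mul, conj_chr]
    rw [show chr (-m) p.1 * chr (-n) p.2 * (chr m' p.1 * chr n' p.2)
        = (chr (-m) p.1 * chr m' p.1) * (chr (-n) p.2 * chr n' p.2) by ring,
      chr_mul, chr_mul, neg_add_eq_sub, neg_add_eq_sub]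
  simp_rw [hpt]
  rw [nu_prod, integral_prod_mul, intChr0, intChr0]
  by_cases h1 : m = m' <;> by_cases h2 : n = n' <;>
    simp [h1, h2, sub_eq_zero, Prod.ext_iff, eq_comm]



lemma haar_eq_volume : (volume : Measure (AddCircle (1:ℝ))) = AddCircle.haarAddCircle := by
  rw [AddCircle.volume_eq_smul_haarAddCircle]; simp

lemma measurePreserving_pi :
    MeasurePreserving (fun x : ℝ => (x : AddCircle (1:ℝ)))
      ((volume : Measure ℝ).restrict (Ioc (0:ℝ) 1)) AddCircle.haarAddCircle := by
  have h := AddCircle.measurePreserving_mk 1 0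
  rw [zero_add, haar_eq_volume] at h
  exact h

lemma vanish1 (g : ℝ → ℂ) (hg2 : MemLp g 2 μ1)
    (hv : ∀ m : ℤ, ∫ x in I01, conj (chr m x) * g x = 0) : g =ᵐ[μ1] 0 := by
  have hIoc : μ1 = (volume : Measure ℝ).restrict (Ioc (0:ℝ) 1) :=
    Measure.restrict_congr_set Ioo_ae_eq_Ioc
  have hg2' : MemLp g 2 ((volume : Measure ℝ).restrict (Ioc (0:ℝ) 1)) := by rwa [hIoc] at hg2
  set pr : ℝ → AddCircle (1:ℝ) := fun x => (x : AddCircle (1:ℝ)) with hprdef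
  have hpr := measurePreserving_pi
  set ψ : AddCircle (1:ℝ) → ℝ :=
    fun z => ((AddCircle.measurableEquivIoc 1 0 z : Set.Ioc (0:ℝ) (0+1)) : ℝ) with hψdef
  have hψm : Measurable ψ :=
    measurable_subtype_coe.comp (AddCircle.measurableEquivIoc 1 0).measurable
  have hsect : ∀ x ∈ Ioc (0:ℝ) 1, ψ (pr x) = x := by
    intro x hx
    have hx' : x ∈ Ioc (0:ℝ) (0+1) := by rwa [zero_add]
    have h1 : (AddCircle.equivIoc 1 0) (pr x) = ⟨x, hx'⟩ := by
      rw [Equiv.apply_eq_iff_eq_symm_apply]; rfl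
    have h2 : (AddCircle.measurableEquivIoc 1 0) (pr x) = (AddCircle.equivIoc 1 0) (pr x) := rfl
    rw [hψdef]; simp only [h2, h1]
  set g' : ℝ → ℂ := hg2'.aestronglyMeasurable.mk g with hg'def
  have hg'sm : StronglyMeasurable g' := hg2'.aestronglyMeasurable.stronglyMeasurable_mk
  have hgg' : g =ᵐ[(volume : Measure ℝ).restrict (Ioc (0:ℝ) 1)] g' :=
    hg2'.aestronglyMeasurable.ae_eq_mk
  set h : AddCircle (1:ℝ) → ℂ := g' ∘ ψ with hhdef
  have hhsm : StronglyMeasurable h := hg'sm.comp_measurable hψm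
  have hcomp : (h ∘ pr) =ᵐ[(volume : Measure ℝ).restrict (Ioc (0:ℝ) 1)] g := by
    filter_upwards [ae_restrict_mem measurableSet_Ioc, hgg'] with x hx h2
    show h (pr x) = g x
    rw [hhdef, Function.comp_apply, hsect x hx, ← h2]
  have hmem : MemLp h 2 AddCircle.haarAddCircle := by
    refine ⟨hhsm.aestronglyMeasurable, ?_⟩
    rw [← eLpNorm_comp_measurePreserving hhsm.aestronglyMeasurable hpr,
      eLpNorm_congr_ae hcomp]
    exact hg2'.2
  have hcoeff : ∀ m : ℤ, fourierCoeff h m = 0 := by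
    intro m
    have hsm : AEStronglyMeasurable (fun t : AddCircle (1:ℝ) => fourier (-m) t • h t)
        (Measure.map pr ((volume : Measure ℝ).restrict (Ioc (0:ℝ) 1))) := by
      rw [hpr.map_eq]
      exact ((fourier (-m)).continuous.aestronglyMeasurable).smul hhsm.aestronglyMeasurable
    rw [fourierCoeff, ← hpr.map_eq, integral_map hpr.measurable.aemeasurable hsm]
    have : (fun x : ℝ => fourier (-m) (pr x) • h (pr x))
        =ᵐ[(volume : Measure ℝ).restrict (Ioc (0:ℝ) 1)]
        (fun x : ℝ => conj (chr m x) * g x) := by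
      filter_upwards [hcomp] with x hx
      have h1 : (fourier (-m) (pr x) : ℂ) = conj (chr m x) := by
        rw [conj_chr, fourier_coe_apply, chr]
        congr 1
        push_cast
        ring
      rw [smul_eq_mul, h1, show h (pr x) = g x from hx]
    rw [integral_congr_ae this, integral_Ioc_eq_integral_Ioo]
    exact hv m
  set hLp : Lp ℂ 2 AddCircle.haarAddCircle := hmem.toLp h with hLpdef
  have hrepr : fourierBasis.repr hLp = 0 := by
    refine lp.ext (funext fun m => ?_)
    have h1 : (fourierBasis.repr hLp) m = fourierCoeff (↑↑hLp) m := fourierBasis_repr hLp m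
    have h2 : fourierCoeff (↑↑hLp : AddCircle (1:ℝ) → ℂ) m = fourierCoeff h m := by
      rw [fourierCoeff, fourierCoeff]
      refine integral_congr_ae ?_
      filter_upwards [hmem.coeFn_toLp] with t ht
      rw [ht]
    simp [h1, h2, hcoeff m]
  have hLp0 : hLp = 0 := fourierBasis.repr.map_eq_zero_iff.mp hrepr
  have hh0 : h =ᵐ[AddCircle.haarAddCircle] 0 := by
    have h1 := hmem.coeFn_toLp
    rw [← hLpdef, hLp0] at h1
    exact h1.symm.trans (Lp.coeFn_zero ℂ 2 AddCircle.haarAddCircle)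
  have hpull : h ∘ pr =ᵐ[(volume : Measure ℝ).restrict (Ioc (0:ℝ) 1)]
      (0 : AddCircle (1:ℝ) → ℂ) ∘ pr := by
    refine ae_eq_comp hpr.measurable.aemeasurable ?_
    rw [hpr.map_eq]
    exact hh0
  rw [hIoc]
  exact hcomp.symm.trans hpull



lemma fourier_eq_chr (k : ℤ) (x : ℝ) :
    (fourier k (x : AddCircle (1:ℝ)) : ℂ) = chr k x := by
  rw [fourier_coe_apply, chr]
  congr 1
  push_cast
  ring

abbrev T2 : Type := AddCircle (1:ℝ) × AddCircle (1:ℝ)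
abbrev μT : Measure T2 := AddCircle.haarAddCircle.prod AddCircle.haarAddCircle

def cF (nm : ℤ × ℤ) : C(T2, ℂ) :=
  ((fourier nm.2).comp ⟨Prod.fst, continuous_fst⟩) *
    ((fourier nm.1).comp ⟨Prod.snd, continuous_snd⟩)

lemma cF_apply (nm : ℤ × ℤ) (z : T2) : cF nm z = fourier nm.2 z.1 * fourier nm.1 z.2 := rfl

def sa : StarSubalgebra ℂ C(T2, ℂ) where
  toSubalgebra := Algebra.adjoin ℂ (Set.range cF)
  star_mem' := by
    show Algebra.adjoin ℂ (Set.range cF) ≤ star (Algebra.adjoin ℂ (Set.range cF))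
    refine Algebra.adjoin_le ?_
    rintro - ⟨nm, rfl⟩
    exact Algebra.subset_adjoin ⟨(-nm.1, -nm.2), ContinuousMap.ext fun z => by
      simp [cF_apply, fourier_neg]⟩

lemma sa_coe : Subalgebra.toSubmodule sa.toSubalgebra = span ℂ (Set.range cF) := by
  apply Algebra.adjoin_eq_span_of_subset
  refine Set.Subset.trans ?_ Submodule.subset_span
  intro x hx
  refine Submonoid.closure_induction (fun _ => id) ⟨(0, 0), ?_⟩ ?_ hx
  · ext1 z; simp [cF_apply, fourier_zero]
  · rintro - - - - ⟨a, rfl⟩ ⟨b, rfl⟩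
    exact ⟨a + b, ContinuousMap.ext fun z => by
      simp [cF_apply, Prod.fst_add, Prod.snd_add, fourier_add]; ring⟩

lemma sa_sep : sa.SeparatesPoints := by
  intro x y hxy
  have hcases : x.1 ≠ y.1 ∨ x.2 ≠ y.2 := by
    by_contra hc; push_neg at hc; exact hxy (Prod.ext hc.1 hc.2)
  rcases hcases with h | h
  · refine ⟨_, ⟨cF (0, 1), Algebra.subset_adjoin ⟨(0, 1), rfl⟩, rfl⟩, ?_⟩
    simp only [cF_apply, fourier_zero, mul_one]
    rw [fourier_one, fourier_one]
    contrapose! h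
    rw [Circle.coe_inj] at h
    exact AddCircle.injective_toCircle one_ne_zero h
  · refine ⟨_, ⟨cF (1, 0), Algebra.subset_adjoin ⟨(1, 0), rfl⟩, rfl⟩, ?_⟩
    simp only [cF_apply, fourier_zero, one_mul]
    rw [fourier_one, fourier_one]
    contrapose! h
    rw [Circle.coe_inj] at h
    exact AddCircle.injective_toCircle one_ne_zero h

lemma span_cF_top : (span ℂ (Set.range cF)).topologicalClosure = ⊤ := by
  rw [← sa_coe]
  exact congr_arg (Subalgebra.toSubmodule <| StarSubalgebra.toSubalgebra ·)
    (ContinuousMap.starSubalgebra_topologicalClosure_eq_top_of_separatesPoints sa sa_sep)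

def cFLp (nm : ℤ × ℤ) : Lp ℂ 2 μT := ContinuousMap.toLp 2 μT ℂ (cF nm)

lemma span_cFLp_top : (span ℂ (Set.range cFLp)).topologicalClosure = ⊤ := by
  convert (ContinuousMap.toLp_denseRange ℂ μT ℂ
    (by norm_num : (2 : ENNReal) ≠ ⊤)).topologicalClosure_map_submodule span_cF_top
  · rfl
  unfold cFLp
  erw [Submodule.map_span, Set.range_comp]
  simp only [ContinuousLinearMap.coe_coe]

lemma vanish2 (g : ℝ × ℝ → ℂ) (hg2 : MemLp g 2 νsq)
    (hv : ∀ nm : ℤ × ℤ, ∫ p, conj (eB nm p) * g p ∂νsq = 0) : g =ᵐ[νsq] 0 := by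
  set νIoc : Measure (ℝ × ℝ) :=
    ((volume : Measure ℝ).restrict (Ioc (0:ℝ) 1)).prod
      ((volume : Measure ℝ).restrict (Ioc (0:ℝ) 1)) with hνIocdef
  have hνeq : νsq = νIoc := by
    rw [nu_prod, hνIocdef]
    congr 1 <;> exact Measure.restrict_congr_set Ioo_ae_eq_Ioc
  have hg2' : MemLp g 2 νIoc := by rwa [hνeq] at hg2
  set pr2 : ℝ × ℝ → T2 :=
    Prod.map (fun x : ℝ => (x : AddCircle (1:ℝ))) (fun x : ℝ => (x : AddCircle (1:ℝ))) with hpr2def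
  have hpr2 : MeasurePreserving pr2 νIoc μT :=
    measurePreserving_pi.prod measurePreserving_pi
  set ψ : AddCircle (1:ℝ) → ℝ :=
    fun z => ((AddCircle.measurableEquivIoc 1 0 z : Set.Ioc (0:ℝ) (0+1)) : ℝ) with hψdef
  have hψm : Measurable ψ :=
    measurable_subtype_coe.comp (AddCircle.measurableEquivIoc 1 0).measurable
  have hsect : ∀ x ∈ Ioc (0:ℝ) 1, ψ ((x : AddCircle (1:ℝ))) = x := by
    intro x hx
    have hx' : x ∈ Ioc (0:ℝ) (0+1) := by rwa [zero_add]
    have h1 : (AddCircle.equivIoc 1 0) ((x : AddCircle (1:ℝ))) = ⟨x, hx'⟩ := by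
      rw [Equiv.apply_eq_iff_eq_symm_apply]; rfl
    have h2 : (AddCircle.measurableEquivIoc 1 0) ((x : AddCircle (1:ℝ)))
        = (AddCircle.equivIoc 1 0) ((x : AddCircle (1:ℝ))) := rfl
    rw [hψdef]; simp only [h2, h1]
  set ψ2 : T2 → ℝ × ℝ := Prod.map ψ ψ with hψ2def
  have hψ2m : Measurable ψ2 := hψm.prodMap hψm
  set g' : ℝ × ℝ → ℂ := hg2'.aestronglyMeasurable.mk g with hg'def
  have hg'sm : StronglyMeasurable g' := hg2'.aestronglyMeasurable.stronglyMeasurable_mk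
  have hgg' : g =ᵐ[νIoc] g' := hg2'.aestronglyMeasurable.ae_eq_mk
  set h : T2 → ℂ := g' ∘ ψ2 with hhdef
  have hhsm : StronglyMeasurable h := hg'sm.comp_measurable hψ2m
  have hmemIoc : ∀ᵐ p ∂νIoc, p ∈ (Ioc (0:ℝ) 1) ×ˢ (Ioc (0:ℝ) 1) := by
    rw [hνIocdef, Measure.prod_restrict]
    exact ae_restrict_mem (measurableSet_Ioc.prod measurableSet_Ioc)
  have hcomp : (h ∘ pr2) =ᵐ[νIoc] g := by
    filter_upwards [hmemIoc, hgg'] with p hp h2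
    show h (pr2 p) = g p
    rw [hhdef, Function.comp_apply, hpr2def]
    have : ψ2 (Prod.map (fun x : ℝ => (x : AddCircle (1:ℝ)))
        (fun x : ℝ => (x : AddCircle (1:ℝ))) p) = p := by
      rw [hψ2def]
      exact Prod.ext (hsect p.1 hp.1) (hsect p.2 hp.2)
    rw [this, ← h2]
  have hmem : MemLp h 2 μT := by
    refine ⟨hhsm.aestronglyMeasurable, ?_⟩
    rw [← eLpNorm_comp_measurePreserving hhsm.aestronglyMeasurable hpr2,
      eLpNorm_congr_ae hcomp]
    exact hg2'.2
  set hLp : Lp ℂ 2 μT := hmem.toLp h with hLpdef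
  have hcoeff : ∀ nm : ℤ × ℤ, (inner ℂ (cFLp nm) hLp : ℂ) = 0 := by
    intro nm
    have e1 : (inner ℂ (cFLp nm) hLp : ℂ) = ∫ z, conj (cF nm z) * h z ∂μT := by
      rw [L2.inner_def]
      refine integral_congr_ae ?_
      filter_upwards [ContinuousMap.coeFn_toLp (𝕜 := ℂ) (p := 2) (μ := μT) (cF nm), hmem.coeFn_toLp]
        with z h1 h2
      rw [RCLike.inner_apply, hLpdef]
      unfold cFLp
      rw [h1, h2, mul_comm]
    have hsm : AEStronglyMeasurable (fun z : T2 => conj (cF nm z) * h z)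
        (Measure.map pr2 νIoc) := by
      rw [hpr2.map_eq]
      exact (Complex.continuous_conj.comp (cF nm).continuous).aestronglyMeasurable.mul
        hhsm.aestronglyMeasurable
    rw [e1, ← hpr2.map_eq, integral_map hpr2.measurable.aemeasurable hsm]
    have e2 : (fun p : ℝ × ℝ => conj (cF nm (pr2 p)) * h (pr2 p)) =ᵐ[νIoc]
        (fun p : ℝ × ℝ => conj (eB nm p) * g p) := by
      filter_upwards [hcomp] with p hp
      have : cF nm (pr2 p) = eB nm p := by
        rw [hpr2def]
        show fourier nm.2 ((p.1 : AddCircle (1:ℝ))) * fourier nm.1 ((p.2 : AddCircle (1:ℝ))) = _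
        rw [fourier_eq_chr, fourier_eq_chr, eB]
      rw [this, show h (pr2 p) = g p from hp]
    rw [integral_congr_ae e2, ← hνeq]
    exact hv nm
  have horth : hLp ∈ (span ℂ (Set.range cFLp))ᗮ := by
    intro u hu
    induction hu using Submodule.span_induction with
    | mem x hx =>
      obtain ⟨nm, rfl⟩ := hx
      exact hcoeff nm
    | zero => exact inner_zero_left _
    | add x y hx hy ihx ihy => rw [inner_add_left, ihx, ihy, add_zero]
    | smul c x hx ih => rw [inner_smul_left, ih, mul_zero]
  have hbot : (span ℂ (Set.range cFLp))ᗮ = ⊥ :=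
    Submodule.topologicalClosure_eq_top_iff.mp span_cFLp_top
  have hLp0 : hLp = 0 := by
    rw [hbot] at horth
    simpa using horth
  have hh0 : h =ᵐ[μT] 0 := by
    have h1 := hmem.coeFn_toLp
    rw [← hLpdef, hLp0] at h1
    exact h1.symm.trans (Lp.coeFn_zero ℂ 2 μT)
  have hpull : h ∘ pr2 =ᵐ[νIoc] (0 : T2 → ℂ) ∘ pr2 := by
    refine ae_eq_comp hpr2.measurable.aemeasurable ?_
    rw [hpr2.map_eq]
    exact hh0
  rw [hνeq]
  exact hcomp.symm.trans hpull



lemma spanB : ⊤ ≤ (span ℂ (Set.range B)).topologicalClosure := by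
  refine le_of_eq ?_
  symm
  rw [Submodule.topologicalClosure_eq_top_iff, Submodule.eq_bot_iff]
  intro g hg
  have hcoef : ∀ nm : ℤ × ℤ, ∫ p, conj (eB nm p) * (g : ℝ × ℝ → ℂ) p ∂νsq = 0 := by
    intro nm
    have h := (Submodule.mem_orthogonal _ g).mp hg (B nm) (Submodule.subset_span ⟨nm, rfl⟩)
    rw [B, inner_toLp_left] at h
    exact h
  have h0 := vanish2 _ (Lp.memLp g) hcoef
  exact Lp.ext (h0.trans (Lp.coeFn_zero ℂ 2 νsq).symm)

lemma spanA : ⊤ ≤ (span ℂ (Set.range A)).topologicalClosure := by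
  refine le_of_eq ?_
  symm
  rw [Submodule.topologicalClosure_eq_top_iff, Submodule.eq_bot_iff]
  intro g hg
  have hcoef : ∀ nm : ℤ × ℤ,
      ∫ x in Ioo (nm.1 : ℝ) (nm.1 + 1), conj (chr nm.2 x) * (g : ℝ → ℂ) x = 0 := by
    intro nm
    have h := (Submodule.mem_orthogonal _ g).mp hg (A nm) (Submodule.subset_span ⟨nm, rfl⟩)
    rw [A, inner_toLp_left] at h
    rw [← h, ← integral_indicator measurableSet_Ioo]
    refine integral_congr_ae (ae_of_all _ fun x => ?_)
    by_cases hx : x ∈ Ioo (nm.1 : ℝ) (nm.1 + 1) <;>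
      simp [eA, Set.indicator, hx]
  -- per-interval vanishing
  have hzero : ∀ n : ℤ, (g : ℝ → ℂ) =ᵐ[(volume : Measure ℝ).restrict (Ioo (n : ℝ) (n + 1))] 0 := by
    intro n
    have hτm : Measurable (fun x : ℝ => x + (n : ℝ)) := measurable_id.add_const _
    have hpre : (fun x : ℝ => x + (n : ℝ)) ⁻¹' (Ioo (n : ℝ) (n + 1)) = I01 := by
      ext x
      simp only [Set.mem_preimage, Set.mem_Ioo]
      constructor <;> intro hx <;> constructor <;> linarith [hx.1, hx.2]
    have hmap : Measure.map (fun x : ℝ => x + (n : ℝ)) μ1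
        = (volume : Measure ℝ).restrict (Ioo (n : ℝ) (n + 1)) := by
      rw [show μ1 = (volume : Measure ℝ).restrict
          ((fun x : ℝ => x + (n : ℝ)) ⁻¹' (Ioo (n : ℝ) (n + 1))) by rw [hpre],
        ← Measure.restrict_map hτm measurableSet_Ioo,
        (measurePreserving_add_right volume (n : ℝ)).map_eq]
    have hτ : MeasurePreserving (fun x : ℝ => x + (n : ℝ)) μ1
        ((volume : Measure ℝ).restrict (Ioo (n : ℝ) (n + 1))) := ⟨hτm, hmap⟩
    set gn : ℝ → ℂ := fun x => (g : ℝ → ℂ) (x + (n : ℝ)) with hgndef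
    have hgsm : AEStronglyMeasurable (g : ℝ → ℂ)
        ((volume : Measure ℝ).restrict (Ioo (n : ℝ) (n + 1))) :=
      (Lp.aestronglyMeasurable g).restrict
    have hgnmem : MemLp gn 2 μ1 := by
      refine ⟨hgsm.comp_measurePreserving hτ, ?_⟩
      rw [show eLpNorm gn 2 μ1 = eLpNorm ((g : ℝ → ℂ) ∘ (fun x : ℝ => x + (n : ℝ))) 2 μ1 from rfl,
        eLpNorm_comp_measurePreserving hgsm hτ]
      calc eLpNorm (g : ℝ → ℂ) 2 ((volume : Measure ℝ).restrict (Ioo (n : ℝ) (n + 1)))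
          ≤ eLpNorm (g : ℝ → ℂ) 2 (volume : Measure ℝ) :=
            eLpNorm_mono_measure _ Measure.restrict_le_self
        _ < ⊤ := (Lp.memLp g).2
    have hgnv : ∀ m : ℤ, ∫ x in I01, conj (chr m x) * gn x = 0 := by
      intro m
      have hsm : AEStronglyMeasurable (fun x : ℝ => conj (chr m x) * (g : ℝ → ℂ) x)
          (Measure.map (fun x : ℝ => x + (n : ℝ)) μ1) := by
        rw [hmap]
        exact (Complex.continuous_conj.comp (chr_continuous m)).aestronglyMeasurable.mul hgsm
      have e1 : ∫ x in Ioo (n : ℝ) (n + 1), conj (chr m x) * (g : ℝ → ℂ) x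
          = ∫ x, conj (chr m (x + (n : ℝ))) * (g : ℝ → ℂ) (x + (n : ℝ)) ∂μ1 := by
        rw [← hmap, integral_map hτm.aemeasurable hsm]
      rw [← hcoef (n, m)]
      rw [e1]
      refine integral_congr_ae (ae_of_all _ fun x => ?_)
      simp only
      rw [chr_int_add]
    have h0 := vanish1 gn hgnmem hgnv
    -- transfer back along the embedding
    have hemb : MeasurableEmbedding (fun x : ℝ => x + (n : ℝ)) := measurableEmbedding_addRight _
    have : ∀ᵐ y ∂(Measure.map (fun x : ℝ => x + (n : ℝ)) μ1), (g : ℝ → ℂ) y = 0 := by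
      rw [hemb.ae_map_iff]
      exact h0
    rw [hmap] at this
    exact this
  have hae : ∀ᵐ x ∂(volume : Measure ℝ), ∀ n : ℤ, x ∈ Ioo (n : ℝ) (n + 1) → (g : ℝ → ℂ) x = 0 :=
    ae_all_iff.mpr fun n => (ae_restrict_iff' measurableSet_Ioo).mp (hzero n)
  have hcov : ∀ᵐ x ∂(volume : Measure ℝ), ∃ n : ℤ, x ∈ Ioo (n : ℝ) (n + 1) := by
    rw [ae_iff]
    refine measure_mono_null ?_ ((Set.countable_range (fun n : ℤ => (n : ℝ))).measure_zero _)
    intro x hx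
    simp only [Set.mem_setOf_eq, not_exists] at hx
    refine ⟨⌊x⌋, ?_⟩
    by_contra hne
    have h1 := Int.floor_le x
    have h2 := Int.lt_floor_add_one x
    have : (⌊x⌋ : ℝ) < x := lt_of_le_of_ne h1 (fun hc => hne hc)
    exact hx ⌊x⌋ ⟨this, h2⟩
  have hg0 : (g : ℝ → ℂ) =ᵐ[(volume : Measure ℝ)] 0 := by
    filter_upwards [hae, hcov] with x h1 h2
    obtain ⟨n, hn⟩ := h2
    exact h1 n hn
  exact Lp.ext (hg0.trans (Lp.coeFn_zero ℂ 2 (volume : Measure ℝ)).symm)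



def bA : HilbertBasis (ℤ × ℤ) ℂ (Lp ℂ 2 (volume : Measure ℝ)) := HilbertBasis.mk orthoA spanA
def bB : HilbertBasis (ℤ × ℤ) ℂ (Lp ℂ 2 νsq) := HilbertBasis.mk orthoB spanB

def Z : Lp ℂ 2 (volume : Measure ℝ) ≃ₗᵢ[ℂ] Lp ℂ 2 νsq := bA.repr.trans bB.repr.symm

lemma bA_repr (v : Lp ℂ 2 (volume : Measure ℝ)) (nm : ℤ × ℤ) :
    bA.repr v nm = (inner ℂ (A nm) v : ℂ) := by
  rw [bA, HilbertBasis.repr_apply_apply]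
  congr 1
  exact congrFun (HilbertBasis.coe_mk orthoA spanA) nm

lemma bB_repr (v : Lp ℂ 2 νsq) (nm : ℤ × ℤ) :
    bB.repr v nm = (inner ℂ (B nm) v : ℂ) := by
  rw [bB, HilbertBasis.repr_apply_apply]
  congr 1
  exact congrFun (HilbertBasis.coe_mk orthoB spanB) nm

lemma shift01 (F : ℝ → ℂ) (n : ℤ) :
    ∫ x in Ioo (n : ℝ) (n + 1), F x = ∫ x in I01, F (x + (n : ℝ)) := by
  rw [← integral_Ioc_eq_integral_Ioo,
    ← intervalIntegral.integral_of_le (by linarith : (n : ℝ) ≤ (n : ℝ) + 1),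
    show (∫ x in I01, F (x + (n : ℝ)))
      = ∫ x in Ioc (0:ℝ) 1, F (x + (n : ℝ)) from (integral_Ioc_eq_integral_Ioo).symm,
    ← intervalIntegral.integral_of_le (zero_le_one : (0:ℝ) ≤ 1),
    intervalIntegral.integral_comp_add_right F (n : ℝ)]
  congr 1 <;> ring

section ZakComp

variable {f : ℝ → ℂ} (hfc : Continuous f) (hfs : HasCompactSupport f)

lemma exists_K (hfs : HasCompactSupport f) :
    ∃ K : Finset ℤ, ∀ k : ℤ, k ∉ K → ∀ x ∈ Set.Icc (0:ℝ) 1, f (x + k) = 0 := by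
  obtain ⟨r, hr⟩ := hfs.isBounded.subset_closedBall 0
  refine ⟨Finset.Icc (⌈-r⌉ - 1) ⌊r⌋, fun k hk x hx => ?_⟩
  by_contra hfx
  have hmem : x + (k : ℝ) ∈ tsupport f := subset_tsupport f hfx
  have habs : |x + (k : ℝ)| ≤ r := by
    have := hr hmem
    rwa [Metric.mem_closedBall, Real.dist_0_eq_abs] at this
  obtain ⟨h1, h2⟩ := abs_le.mp habs
  rw [Finset.mem_Icc, not_and_or] at hk
  rcases hk with hk | hk
  · push_neg at hk
    have hk' : (k : ℝ) ≤ (⌈-r⌉ : ℝ) - 2 := by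
      have : k ≤ ⌈-r⌉ - 2 := by omega
      exact_mod_cast this
    have hceil : (⌈-r⌉ : ℝ) < -r + 1 := Int.ceil_lt_add_one _
    linarith [hx.2]
  · push_neg at hk
    have hk' : (⌊r⌋ : ℝ) + 1 ≤ (k : ℝ) := by exact_mod_cast hk
    have hfl : r < (⌊r⌋ : ℝ) + 1 := Int.lt_floor_add_one r
    linarith [hx.1]

variable (K : Finset ℤ) (hK : ∀ k : ℤ, k ∉ K → ∀ x ∈ Set.Icc (0:ℝ) 1, f (x + k) = 0)

def Fk (f : ℝ → ℂ) (K : Finset ℤ) : ℝ × ℝ → ℂ :=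
  fun p => ∑ k ∈ K, f (p.1 + (k : ℝ)) * chr k p.2

lemma Fk_continuous (hfc : Continuous f) : Continuous (Fk f K) := by
  refine continuous_finset_sum _ fun k _ => ?_
  exact (hfc.comp (continuous_fst.add continuous_const)).mul
    ((chr_continuous k).comp continuous_snd)

lemma memFk (hfc : Continuous f) (hfs : HasCompactSupport f) : MemLp (Fk f K) 2 νsq := by
  obtain ⟨C, hC⟩ := hfs.exists_bound_of_continuous hfc
  refine MemLp.of_bound (Fk_continuous K hfc).aestronglyMeasurable ((K.card : ℝ) * C)
    (ae_of_all _ fun p => ?_)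
  calc ‖Fk f K p‖ ≤ ∑ k ∈ K, ‖f (p.1 + (k : ℝ)) * chr k p.2‖ := norm_sum_le _ _
    _ ≤ ∑ _k ∈ K, C := by
        refine Finset.sum_le_sum fun k _ => ?_
        rw [norm_mul, norm_chr, mul_one]
        exact hC _
    _ = (K.card : ℝ) * C := by rw [Finset.sum_const, nsmul_eq_mul]

lemma memf (hfc : Continuous f) (hfs : HasCompactSupport f) :
    MemLp f 2 (volume : Measure ℝ) := hfc.memLp_of_hasCompactSupport hfs

lemma term_integrable (hfc : Continuous f) (hfs : HasCompactSupport f) (nm : ℤ × ℤ) (k : ℤ) :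
    Integrable (fun p : ℝ × ℝ =>
      (conj (chr nm.2 p.1) * f (p.1 + (k : ℝ))) * (conj (chr nm.1 p.2) * chr k p.2)) νsq := by
  obtain ⟨C, hC⟩ := hfs.exists_bound_of_continuous hfc
  rw [← memLp_one_iff_integrable]
  refine MemLp.of_bound ?_ C (ae_of_all _ fun p => ?_)
  · refine Continuous.aestronglyMeasurable ?_
    refine Continuous.mul ?_ ?_
    · exact (Complex.continuous_conj.comp ((chr_continuous nm.2).comp continuous_fst)).mul
        (hfc.comp (continuous_fst.add continuous_const))
    · exact (Complex.continuous_conj.comp ((chr_continuous nm.1).comp continuous_snd)).mul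
        ((chr_continuous k).comp continuous_snd)
  · simp only [norm_mul, RCLike.norm_conj, norm_chr, one_mul, mul_one]
    exact hC (p.1 + (k : ℝ))

lemma key_coeff (hfc : Continuous f) (hfs : HasCompactSupport f)
    (hK : ∀ k : ℤ, k ∉ K → ∀ x ∈ Set.Icc (0:ℝ) 1, f (x + k) = 0) (nm : ℤ × ℤ) :
    (inner ℂ (B nm) ((memFk K hfc hfs).toLp (Fk f K)) : ℂ)
      = (inner ℂ (A nm) ((memf hfc hfs).toLp f) : ℂ) := by
  obtain ⟨n, m⟩ := nm
  -- RHS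
  have hrhs : (inner ℂ (A (n, m)) ((memf hfc hfs).toLp f) : ℂ)
      = ∫ x in I01, conj (chr m x) * f (x + (n : ℝ)) := by
    rw [A, inner_toLp_toLp]
    have e1 : ∀ x : ℝ, conj (eA (n, m) x) * f x
        = (Ioo (n : ℝ) (n + 1)).indicator (fun x => conj (chr m x) * f x) x := by
      intro x
      by_cases hx : x ∈ Ioo (n : ℝ) (n + 1) <;> simp [eA, Set.indicator, hx]
    simp_rw [e1]
    rw [integral_indicator measurableSet_Ioo, shift01 (fun x => conj (chr m x) * f x) n]
    refine integral_congr_ae (ae_of_all _ fun x => ?_)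
    simp only
    rw [chr_int_add]
  -- LHS
  rw [B, inner_toLp_toLp]
  have e2 : ∀ p : ℝ × ℝ, conj (eB (n, m) p) * Fk f K p
      = ∑ k ∈ K, (conj (chr m p.1) * f (p.1 + (k : ℝ))) * (conj (chr n p.2) * chr k p.2) := by
    intro p
    rw [eB, Fk, Finset.mul_sum]
    refine Finset.sum_congr rfl fun k _ => ?_
    simp only [map_mul]
    ring
  simp_rw [e2]
  rw [integral_finset_sum _ (fun k _ => term_integrable hfc hfs (n, m) k)]
  have e3 : ∀ k ∈ K, (∫ p, (conj (chr m p.1) * f (p.1 + (k : ℝ)))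
      * (conj (chr n p.2) * chr k p.2) ∂νsq)
      = (∫ x in I01, conj (chr m x) * f (x + (k : ℝ))) * (if k = n then 1 else 0) := by
    intro k _
    have h := integral_prod_mul (μ := μ1) (ν := μ1)
      (fun x => conj (chr m x) * f (x + (k : ℝ))) (fun a => conj (chr n a) * chr k a)
    beta_reduce at h
    rw [nu_prod, h]
    congr 1
    have e4 : ∀ a : ℝ, conj (chr n a) * chr k a = chr (k - n) a := by
      intro a
      rw [conj_chr, chr_mul, neg_add_eq_sub]
    simp_rw [e4]
    rw [intChr0]
    congr 1
    simp [sub_eq_zero]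
  rw [Finset.sum_congr rfl e3]
  simp_rw [mul_ite, mul_one, mul_zero]
  rw [Finset.sum_ite_eq' K n (fun k => ∫ x in I01, conj (chr m x) * f (x + (k : ℝ)))]
  by_cases hn : n ∈ K
  · rw [if_pos hn, hrhs]
  · rw [if_neg hn, hrhs]
    symm
    have : ∀ᵐ x ∂μ1, conj (chr m x) * f (x + (n : ℝ)) = 0 := by
      filter_upwards [ae_restrict_mem measurableSet_Ioo] with x hx
      rw [hK n hn x ⟨hx.1.le, hx.2.le⟩, mul_zero]
    rw [integral_congr_ae this, integral_zero]

end ZakComp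


lemma Z_isZak : IsZakTransform Z := by
  intro f hfc hfs g hg
  obtain ⟨K, hK⟩ := exists_K hfs
  have hgeq : g = (memf hfc hfs).toLp f := Lp.ext (hg.trans (memf hfc hfs).coeFn_toLp.symm)
  have hrepr : bA.repr ((memf hfc hfs).toLp f)
      = bB.repr ((memFk K hfc hfs).toLp (Fk f K)) := by
    refine lp.ext (funext fun nm => ?_)
    show bA.repr ((memf hfc hfs).toLp f) nm = bB.repr ((memFk K hfc hfs).toLp (Fk f K)) nm
    rw [bA_repr, bB_repr]
    exact (key_coeff K hfc hfs hK nm).symm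
  have hZg : Z g = (memFk K hfc hfs).toLp (Fk f K) := by
    rw [hgeq, Z, LinearIsometryEquiv.trans_apply, hrepr, LinearIsometryEquiv.symm_apply_apply]
  rw [hZg]
  refine (memFk K hfc hfs).coeFn_toLp.trans ?_
  filter_upwards [ae_restrict_mem ((measurableSet_Ioo.prod measurableSet_Ioo)
    : MeasurableSet (I01 ×ˢ I01))] with p hp
  show Fk f K p = _
  rw [Fk]
  exact (tsum_eq_sum fun k hk => by
    rw [hK k hk p.1 ⟨hp.1.1.le, hp.1.2.le⟩, zero_mul]).symm

lemma norm_sq_integral {α : Type*} [MeasurableSpace α] {μ : Measure α} (h : Lp ℂ 2 μ) :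
    ∫ x, ‖(h : α → ℂ) x‖ ^ 2 ∂μ = ‖h‖ ^ 2 := by
  rw [← inner_self_eq_norm_sq (𝕜 := ℂ) h, L2.inner_def, ← integral_re (L2.integrable_inner h h)]
  refine integral_congr_ae (ae_of_all _ fun x => ?_)
  exact (inner_self_eq_norm_sq (𝕜 := ℂ) _).symm

lemma zak_unique {W V : Lp ℂ 2 (volume : Measure ℝ) ≃ₗᵢ[ℂ] Lp ℂ 2 νsq}
    (hW : IsZakTransform W) (hV : IsZakTransform V) : W = V := by
  refine LinearIsometryEquiv.ext fun g => ?_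
  have hdist : ∀ ε : ℝ, 0 < ε → ‖W g - V g‖ ≤ 2 * ε := by
    intro ε hε
    obtain ⟨f0, hf0supp, hf0close, hf0cont, hf0mem⟩ :=
      (Lp.memLp g).exists_hasCompactSupport_eLpNorm_sub_le
        (by norm_num : (2 : ENNReal) ≠ ⊤)
        (ε := ENNReal.ofReal ε) (by simp [ENNReal.ofReal_eq_zero]; linarith)
    set fL := hf0mem.toLp f0 with hfLdef
    have hWV : W fL = V fL := by
      have h1 := hW f0 hf0cont hf0supp fL hf0mem.coeFn_toLp
      have h2 := hV f0 hf0cont hf0supp fL hf0mem.coeFn_toLp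
      exact Lp.ext (h1.trans h2.symm)
    have hdistg : ‖g - fL‖ ≤ ε := by
      rw [Lp.norm_def]
      have he : eLpNorm (((g - fL) : Lp ℂ 2 (volume : Measure ℝ)) : ℝ → ℂ) 2 volume
          = eLpNorm ((g : ℝ → ℂ) - f0) 2 volume := by
        apply eLpNorm_congr_ae
        filter_upwards [Lp.coeFn_sub g fL, hf0mem.coeFn_toLp] with x h1 h2
        rw [h1]
        show (g : ℝ → ℂ) x - (fL : ℝ → ℂ) x = (g : ℝ → ℂ) x - f0 x
        rw [h2]
      rw [he]
      calc (eLpNorm ((g : ℝ → ℂ) - f0) 2 volume).toReal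
          ≤ (ENNReal.ofReal ε).toReal := ENNReal.toReal_mono (by simp) hf0close
        _ = ε := ENNReal.toReal_ofReal hε.le
    calc ‖W g - V g‖ = ‖(W g - W fL) + (V fL - V g)‖ := by rw [hWV]; congr 1; abel
      _ ≤ ‖W g - W fL‖ + ‖V fL - V g‖ := norm_add_le _ _
      _ = ‖g - fL‖ + ‖fL - g‖ := by
          rw [← map_sub, ← map_sub, W.norm_map, V.norm_map]
      _ ≤ ε + ε := by rw [norm_sub_rev fL g]; linarith
      _ = 2 * ε := by ring
  have hz : ‖W g - V g‖ ≤ 0 := by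
    by_contra hpos
    push_neg at hpos
    have := hdist (‖W g - V g‖ / 4) (by linarith)
    linarith
  have : W g - V g = 0 := norm_le_zero_iff.mp hz
  exact sub_eq_zero.mp this

end
end ZakProof

/-- There is a unique unitary `Z : L²(ℝ,ℂ) → L²((0,1)×(0,1),ℂ)` such that
for every continuous compactly supported `f` and a.e. `(x,a) ∈ (0,1)²`,
`(Zf)(x,a) = ∑_{n∈ℤ} f(x+n) e^{2πian}`; in particular any such transform intertwines the
norms: `∫₀¹∫₀¹ |(Zf)(x,a)|² da dx = ∫_ℝ |f|²`. -/
theorem zak_transform_exists_unique :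
    (∃! Zop : Lp ℂ 2 (volume : Measure ℝ) ≃ₗᵢ[ℂ]
        Lp ℂ 2 ((volume : Measure (ℝ × ℝ)).restrict (Set.Ioo (0 : ℝ) 1 ×ˢ Set.Ioo (0 : ℝ) 1)),
      IsZakTransform Zop) ∧
    (∀ Zop : Lp ℂ 2 (volume : Measure ℝ) ≃ₗᵢ[ℂ]
        Lp ℂ 2 ((volume : Measure (ℝ × ℝ)).restrict (Set.Ioo (0 : ℝ) 1 ×ˢ Set.Ioo (0 : ℝ) 1)),
      IsZakTransform Zop →
        ∀ g : Lp ℂ 2 (volume : Measure ℝ),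
          ∫ x : ℝ × ℝ, ‖(Zop g : ℝ × ℝ → ℂ) x‖ ^ 2
              ∂((volume : Measure (ℝ × ℝ)).restrict (Set.Ioo (0 : ℝ) 1 ×ˢ Set.Ioo (0 : ℝ) 1)) =
            ∫ s : ℝ, ‖(g : ℝ → ℂ) s‖ ^ 2) := by
  constructor
  · exact ⟨ZakProof.Z, ZakProof.Z_isZak, fun W hW => ZakProof.zak_unique hW ZakProof.Z_isZak⟩
  · intro Zop _ g
    rw [ZakProof.norm_sq_integral (Zop g), ZakProof.norm_sq_integral g,
      Zop.norm_map]
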